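/- arXiv:0812.3179 — 5 statements merged into one kernel-verified Lean document; each statement's English description precedes it below -/
import Mathlib

section
/- Every λ ∈ X(T)^+ has only finitely many predecessors in X(T)^+, i.e. the set of μ ∈ X(T)^+ such that μ < λ and there is no ν ∈ X(T)^+ with μ < ν < λ is finite. -/
/-!
Given dominant `μ < λ`, take a maximal run `a < k ≤ b` of indices on which the partial sums of
`μ` lie strictly below those of `λ`. Moving one unit from coordinate `b` to coordinate `a` raises
exactly these partial sums by one, so `ν = μ + e_a - e_b` satisfies `μ < ν ≤ λ`; and since the
partial sums agree at both ends of the run, `μ_a < λ_a ≤ λ_{a-1} ≤ μ_{a-1}` and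
`μ_{b+1} ≤ λ_{b+1} ≤ λ_b < μ_b`, which keeps `ν` dominant. For a predecessor `μ` this forces
`ν = λ`, so `μ = λ - e_a + e_b` ranges over a finite set.
-/

/-- Partial sum of the first `k` coordinates of `μ ∈ ℤ^{m+n}`. -/
def psum (m n : ℕ) (μ : Fin (m + n) → ℤ) (k : ℕ) : ℤ :=
  ∑ i : Fin (m + n), if (i : ℕ) < k then μ i else 0

/-- Dominance order on `ℤ^{m+n}`: `μ ≤ λ` iff all proper initial partial sums of `μ` are
at most those of `λ`, and the total sums agree. -/
def domLE (m n : ℕ) (μ lam : Fin (m + n) → ℤ) : Prop :=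
  (∀ k : ℕ, 1 ≤ k → k < m + n → psum m n μ k ≤ psum m n lam k) ∧
    psum m n μ (m + n) = psum m n lam (m + n)

/-- Strict dominance order. -/
def domLT (m n : ℕ) (μ lam : Fin (m + n) → ℤ) : Prop :=
  domLE m n μ lam ∧ μ ≠ lam

/-- Membership in `X(T)^+`: the first `m` coordinates are weakly decreasing, and the last `n`
coordinates are weakly decreasing. -/
def IsDominant (m n : ℕ) (lam : Fin (m + n) → ℤ) : Prop :=
  (∀ i j : Fin (m + n), (i : ℕ) ≤ (j : ℕ) → (j : ℕ) < m → lam j ≤ lam i) ∧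
    (∀ i j : Fin (m + n), m ≤ (i : ℕ) → (i : ℕ) ≤ (j : ℕ) → lam j ≤ lam i)

lemma exists_positive_run (d : ℕ → ℤ) (hd : ∀ k, 0 ≤ d k) (h0 : d 0 = 0) {k N : ℕ}
    (hk : 0 < d k) (hkN : k < N) (hN : d N = 0) :
    ∃ a b, a < b ∧ b < N ∧ d a = 0 ∧ d (b + 1) = 0 ∧ ∀ i, a < i → i ≤ b → 0 < d i := by
  classical
  have hr : ∃ r, 0 < d r := ⟨k, hk⟩
  have hs : ∃ s, Nat.find hr < s ∧ d s = 0 := ⟨N, (Nat.find_min' hr hk).trans_lt hkN, hN⟩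
  have hr0 : Nat.find hr ≠ 0 := fun h => by simpa [h, h0] using Nat.find_spec hr
  obtain ⟨hrs, hs0⟩ := Nat.find_spec hs
  have hsN : Nat.find hs ≤ N := Nat.find_min' hs ⟨(Nat.find_min' hr hk).trans_lt hkN, hN⟩
  refine ⟨Nat.find hr - 1, Nat.find hs - 1, by omega, by omega, ?_, ?_, fun i hri his => ?_⟩
  · exact le_antisymm (not_lt.1 (Nat.find_min hr (by omega))) (hd _)
  · rwa [Nat.sub_add_cancel (by omega)]
  · rcases (show Nat.find hr ≤ i by omega).eq_or_lt with rfl | hri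
    · exact Nat.find_spec hr
    · exact (hd i).lt_of_ne' fun h => Nat.find_min hs (by omega) ⟨hri, h⟩

lemma apply_le_apply_of_succ_le {N c : ℕ} {f : Fin N → ℤ}
    (hf : ∀ i j : Fin N, (j : ℕ) = i + 1 → (j : ℕ) ≠ c → f j ≤ f i) {i j : Fin N} (hij : i ≤ j)
    (hc : ∀ l : ℕ, (i : ℕ) < l → l ≤ j → l ≠ c) : f j ≤ f i := by
  obtain ⟨j, hj⟩ := j
  induction j with
  | zero => rw [(Fin.ext (Nat.le_zero.1 hij) : i = ⟨0, hj⟩)]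
  | succ j ih =>
    rcases hij.eq_or_lt with rfl | hlt
    · rfl
    have hij' : i ≤ ⟨j, by omega⟩ := Fin.le_iff_val_le_val.2 (Nat.lt_succ_iff.1 hlt)
    calc f ⟨j + 1, hj⟩ ≤ f ⟨j, by omega⟩ := hf _ _ rfl (hc _ hlt le_rfl)
      _ ≤ f i := ih _ hij' fun l hl hlj => hc l hl (hlj.trans j.le_succ)

section

variable {m n : ℕ}

lemma psum_succ (μ : Fin (m + n) → ℤ) {k : ℕ} (hk : k < m + n) :
    psum m n μ (k + 1) = psum m n μ k + μ ⟨k, hk⟩ := by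
  have : Finset.univ.filter (fun i : Fin (m + n) => (i : ℕ) < k + 1) =
      insert ⟨k, hk⟩ (Finset.univ.filter fun i : Fin (m + n) => (i : ℕ) < k) := by
    ext i
    simp only [Finset.mem_filter, Finset.mem_univ, true_and, Finset.mem_insert, Fin.ext_iff]
    omega
  simp only [psum, ← Finset.sum_filter, this]
  rw [Finset.sum_insert (by simp), add_comm]

lemma psum_of_le (μ : Fin (m + n) → ℤ) {k : ℕ} (hk : m + n ≤ k) :
    psum m n μ k = psum m n μ (m + n) := by
  simp only [psum]
  congr! 2 with i
  simp [i.isLt, i.isLt.trans_le hk]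

lemma psum_add (μ ν : Fin (m + n) → ℤ) (k : ℕ) :
    psum m n (μ + ν) k = psum m n μ k + psum m n ν k := by
  simp only [psum, ← Finset.sum_filter, Pi.add_apply, Finset.sum_add_distrib]

lemma psum_sub (μ ν : Fin (m + n) → ℤ) (k : ℕ) :
    psum m n (μ - ν) k = psum m n μ k - psum m n ν k := by
  simp only [psum, ← Finset.sum_filter, Pi.sub_apply, Finset.sum_sub_distrib]

lemma psum_single (A : Fin (m + n)) (c : ℤ) (k : ℕ) :
    psum m n (Pi.single A c) k = if (A : ℕ) < k then c else 0 := by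
  simp [psum, ← Finset.sum_filter, Finset.sum_pi_single']

lemma psum_add_single_sub_single (μ : Fin (m + n) → ℤ) (A B : Fin (m + n)) (k : ℕ) :
    psum m n (μ + Pi.single A 1 - Pi.single B 1) k =
      psum m n μ k + (if (A : ℕ) < k then 1 else 0) - (if (B : ℕ) < k then 1 else 0) := by
  rw [psum_sub, psum_add, psum_single, psum_single]

lemma domLE.psum_le {μ lam : Fin (m + n) → ℤ} (h : domLE m n μ lam) (k : ℕ) :
    psum m n μ k ≤ psum m n lam k := by
  rcases Nat.eq_zero_or_pos k with rfl | hk0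
  · simp [psum]
  rcases lt_or_ge k (m + n) with hk | hk
  · exact h.1 k hk0 hk
  · rw [psum_of_le μ hk, psum_of_le lam hk, h.2]

lemma eq_of_forall_psum_eq {μ ν : Fin (m + n) → ℤ} (h : ∀ k, psum m n μ k = psum m n ν k) :
    μ = ν := by
  funext i
  have hμ := psum_succ μ i.isLt
  have hν := psum_succ ν i.isLt
  rw [h, h] at hμ
  simp only [Fin.eta] at hμ hν
  linarith

lemma isDominant_iff_succ_le {lam : Fin (m + n) → ℤ} :
    IsDominant m n lam ↔
      ∀ i j : Fin (m + n), (j : ℕ) = i + 1 → (j : ℕ) ≠ m → lam j ≤ lam i := by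
  refine ⟨fun h i j hji hjm => ?_, fun h => ⟨fun i j hij hjm => ?_, fun i j him hij => ?_⟩⟩
  · rcases lt_or_gt_of_ne hjm with hjm | hjm
    · exact h.1 i j (by omega) hjm
    · exact h.2 i j (by omega) (by omega)
  · exact apply_le_apply_of_succ_le h hij (by omega)
  · exact apply_le_apply_of_succ_le h hij (by omega)

lemma IsDominant.add_single_sub_single {μ : Fin (m + n) → ℤ} (hμ : IsDominant m n μ)
    {A B : Fin (m + n)} (hAB : A < B)
    (hA : ∀ i : Fin (m + n), (A : ℕ) = i + 1 → (A : ℕ) ≠ m → μ A < μ i)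
    (hB : ∀ j : Fin (m + n), (j : ℕ) = B + 1 → (j : ℕ) ≠ m → μ j < μ B) :
    IsDominant m n (μ + Pi.single A 1 - Pi.single B 1) := by
  rw [isDominant_iff_succ_le] at hμ ⊢
  intro i j hji hjm
  have hμij := hμ i j hji hjm
  simp only [Pi.add_apply, Pi.sub_apply, Pi.single_apply]
  by_cases hjA : j = A
  · subst hjA
    have := hA i hji hjm
    have : i ≠ j := by rintro rfl; omega
    have : i ≠ B := by rintro rfl; rw [Fin.lt_def] at hAB; omega
    split_ifs <;> omega
  by_cases hiB : i = B
  · subst hiB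
    have := hB j hji hjm
    split_ifs <;> omega
  split_ifs <;> omega

lemma exists_dominant_step {μ lam : Fin (m + n) → ℤ} (hμ : IsDominant m n μ)
    (hlam : IsDominant m n lam) (h : domLT m n μ lam) :
    ∃ A B : Fin (m + n), IsDominant m n (μ + Pi.single A 1 - Pi.single B 1) ∧
      domLT m n μ (μ + Pi.single A 1 - Pi.single B 1) ∧
      domLE m n (μ + Pi.single A 1 - Pi.single B 1) lam := by
  set d : ℕ → ℤ := fun k => psum m n lam k - psum m n μ k with hd
  have hd_nonneg : ∀ k, 0 ≤ d k := fun k => sub_nonneg.2 (h.1.psum_le k)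
  have hd_succ : ∀ i : Fin (m + n), d (i + 1) - d i = lam i - μ i := fun i => by
    simp only [hd, psum_succ _ i.isLt, Fin.eta]; ring
  obtain ⟨k, hk⟩ : ∃ k, 0 < d k := by
    by_contra! hle
    exact h.2 (eq_of_forall_psum_eq fun k => by linarith [hle k, hd_nonneg k])
  have hkN : k < m + n := by
    by_contra! hkN
    simp only [hd, psum_of_le _ hkN, h.1.2, sub_self, lt_irrefl] at hk
  obtain ⟨a, b, hab, hbN, ha, hb, hpos⟩ :=
    exists_positive_run d hd_nonneg (by simp [hd, psum]) hk hkN (by simp [hd, h.1.2])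
  set A : Fin (m + n) := ⟨a, by omega⟩
  set B : Fin (m + n) := ⟨b, hbN⟩
  have hA_val : (A : ℕ) = a := rfl
  have hB_val : (B : ℕ) = b := rfl
  have hpsum := psum_add_single_sub_single μ A B
  have hν_dom : IsDominant m n (μ + Pi.single A 1 - Pi.single B 1) := by
    refine hμ.add_single_sub_single (Fin.lt_def.2 hab) (fun i hi hAm => ?_) (fun j hj hjm => ?_)
    · have h1 : d (a + 1) - d a = lam A - μ A := hd_succ A
      have h2 : d a - d i = lam i - μ i := by rw [← hd_succ i, ← hi]
      linarith [hpos (a + 1) (by omega) (by omega), hd_nonneg i,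
        isDominant_iff_succ_le.1 hlam i A hi hAm]
    · have h1 : d (b + 1) - d b = lam B - μ B := hd_succ B
      have h2 : d (j + 1) - d (b + 1) = lam j - μ j := by rw [← hd_succ j, hj]
      linarith [hpos b (by omega) le_rfl, hd_nonneg (j + 1),
        isDominant_iff_succ_le.1 hlam B j hj hjm]
  refine ⟨A, B, hν_dom, ⟨⟨fun k _ _ => ?_, ?_⟩, fun hμν => ?_⟩, ⟨fun k _ _ => ?_, ?_⟩⟩
  · rw [hpsum]
    split_ifs <;> omega
  · simp [hpsum]
  · have := congrFun hμν A
    simp [A, B, hab.ne] at this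
  · have hdk := hpos k
    have hdk' := hd_nonneg k
    simp only [hd] at hdk hdk'
    rw [hpsum]
    split_ifs <;> omega
  · simp [hpsum, h.1.2]

end

theorem finite_predecessors_general (m n : ℕ)
    (lam : Fin (m + n) → ℤ) (hlam : IsDominant m n lam) :
    {μ : Fin (m + n) → ℤ | IsDominant m n μ ∧ domLT m n μ lam ∧
      ¬∃ ν : Fin (m + n) → ℤ, IsDominant m n ν ∧ domLT m n μ ν ∧ domLT m n ν lam}.Finite := by
  refine (Set.finite_range fun p : Fin (m + n) × Fin (m + n) =>
    lam + Pi.single p.2 1 - Pi.single p.1 1).subset ?_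
  rintro μ ⟨hμ, hμlam, hμ_pred⟩
  obtain ⟨A, B, hν, hμν, hνlam⟩ := exists_dominant_step hμ hlam hμlam
  have hν_eq : μ + Pi.single A 1 - Pi.single B 1 = lam := by
    by_contra hne
    exact hμ_pred ⟨_, hν, hμν, hνlam, hne⟩
  exact ⟨(A, B), by simp [← hν_eq]⟩

/-- Every `λ ∈ X(T)^+` has only finitely many predecessors in `X(T)^+`: the set of
`μ ∈ X(T)^+` with `μ < λ` such that no `ν ∈ X(T)^+` satisfies `μ < ν < λ` is finite. -/
theorem finite_predecessors (m n : ℕ) (hm : 1 ≤ m) (hn : 1 ≤ n)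
    (lam : Fin (m + n) → ℤ) (hlam : IsDominant m n lam) :
    {μ : Fin (m + n) → ℤ | IsDominant m n μ ∧ domLT m n μ lam ∧
      ¬∃ ν : Fin (m + n) → ℤ, IsDominant m n ν ∧ domLT m n μ ν ∧ domLT m n ν lam}.Finite :=
  finite_predecessors_general m n lam hlam
end

section
/- Let (Λ, ≤) be a partially ordered set in which every element has only finitely many predecessors and every closed interval {ν : μ ≤ ν ≤ λ} is finite. Then every finitely generated ideal Γ of Λ admits a decreasing chain of finitely generated ideals Γ = Γ_0 ⊇ Γ_1 ⊇ Γ_2 ⊇ … such that Γ \ Γ_k is a finite set for every k ≥ 0 and ⋂_{k ≥ 0} Γ_k = ∅. -/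
/-!
Take `Γ_k` to be the ideal generated by the `k`-fold lower covers of the generators of `Γ`.
Finite intervals make the order strongly coatomic: an element strictly below `y` lies below a
lower cover of `y`. Hence `Γ_k \ Γ_{k+1}` consists of generators of `Γ_k`, and `Γ \ Γ_k` is
finite. A generator of `Γ_k` is the bottom of a covering chain of length `k` ending at a generator
`y` of `Γ`, so `ν ∈ Γ_k` forces `[ν, y]` to have more than `k` elements; as there are finitely
many `y`, no `ν` lies in every `Γ_k`.
-/

/-- A subset of a poset is a finitely generated ideal if it is a finite union of
principal ideals `(λ] = {μ : μ ≤ λ}`. -/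
def IsFGIdeal {Λ : Type*} [PartialOrder Λ] (Γ : Set Λ) : Prop :=
  ∃ s : Finset Λ, Γ = {μ : Λ | ∃ x ∈ s, μ ≤ x}

section LowerCovers

open Finset

variable {Λ : Type*} [PartialOrder Λ]

lemma isFGIdeal_lowerClosure {t : Set Λ} (ht : t.Finite) : IsFGIdeal (lowerClosure t : Set Λ) :=
  ⟨ht.toFinset, by ext; simp⟩

def lowerCovers (t : Set Λ) : Set Λ := {x | ∃ y ∈ t, x ⋖ y}

lemma finite_lowerCovers (hpred : ∀ y : Λ, {x : Λ | x ⋖ y}.Finite) {t : Set Λ}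
    (ht : t.Finite) : (lowerCovers t).Finite :=
  (ht.biUnion fun y _ => hpred y).subset fun _ ⟨_, hy, hxy⟩ => Set.mem_biUnion hy hxy

lemma finite_iterate_lowerCovers (hpred : ∀ y : Λ, {x : Λ | x ⋖ y}.Finite) {s : Set Λ}
    (hs : s.Finite) (k : ℕ) : (lowerCovers^[k] s).Finite := by
  induction k with
  | zero => exact hs
  | succ k ih => simpa only [Function.iterate_succ_apply'] using finite_lowerCovers hpred ih

lemma lowerClosure_lowerCovers_le (t : Set Λ) : lowerClosure (lowerCovers t) ≤ lowerClosure t :=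
  lowerClosure_le.2 fun _ ⟨y, hy, hxy⟩ => ⟨y, hy, hxy.le⟩

lemma lowerClosure_diff_lowerClosure_lowerCovers_subset [IsStronglyCoatomic Λ] (t : Set Λ) :
    (lowerClosure t : Set Λ) \ lowerClosure (lowerCovers t) ⊆ t := by
  rintro x ⟨⟨y, hy, hxy⟩, hx⟩
  obtain rfl | hlt := hxy.eq_or_lt
  · exact hy
  · obtain ⟨z, hxz, hzy⟩ := exists_le_covBy_of_lt hlt
    exact absurd ⟨z, ⟨y, hy, hzy⟩, hxz⟩ hx

lemma finite_lowerClosure_diff_lowerClosure_iterate_lowerCovers [IsStronglyCoatomic Λ]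
    (hpred : ∀ y : Λ, {x : Λ | x ⋖ y}.Finite) {s : Set Λ} (hs : s.Finite) (k : ℕ) :
    ((lowerClosure s : Set Λ) \ lowerClosure (lowerCovers^[k] s)).Finite := by
  induction k with
  | zero => simp
  | succ k ih =>
    refine (ih.union (finite_iterate_lowerCovers hpred hs k)).subset fun x ⟨hxs, hx⟩ => ?_
    by_cases hxk : x ∈ lowerClosure (lowerCovers^[k] s)
    · rw [Function.iterate_succ_apply'] at hx
      exact .inr (lowerClosure_diff_lowerClosure_lowerCovers_subset _ ⟨hxk, hx⟩)
    · exact .inl ⟨hxs, hxk⟩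

lemma exists_le_lt_card_Icc_of_mem_iterate_lowerCovers [LocallyFiniteOrder Λ]
    {s : Set Λ} {k : ℕ} {x : Λ}
    (hx : x ∈ lowerCovers^[k] s) : ∃ y ∈ s, x ≤ y ∧ k < #(Icc x y) := by
  induction k generalizing x with
  | zero => exact ⟨x, hx, le_rfl, by simp⟩
  | succ k ih =>
    rw [Function.iterate_succ_apply'] at hx
    obtain ⟨z, hz, hxz⟩ := hx
    obtain ⟨y, hy, hzy, hk⟩ := ih hz
    have hxy := hxz.le.trans hzy
    have hIcc : #(Icc z y) < #(Icc x y) :=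
      card_lt_card (Icc_ssubset_Icc_left hxy hxz.lt le_rfl)
    exact ⟨y, hy, hxy, Nat.lt_of_le_of_lt hk hIcc⟩

lemma iInter_lowerClosure_iterate_lowerCovers_eq_empty [LocallyFiniteOrder Λ] {s : Set Λ}
    (hs : s.Finite) : ⋂ k, (lowerClosure (lowerCovers^[k] s) : Set Λ) = ∅ := by
  refine Set.eq_empty_of_forall_notMem fun x hx => ?_
  set N := hs.toFinset.sup fun y => #(Icc x y)
  obtain ⟨z, hz, hxz⟩ := Set.mem_iInter.1 hx N
  obtain ⟨y, hy, hzy, hN⟩ := exists_le_lt_card_Icc_of_mem_iterate_lowerCovers hz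
  have hle : #(Icc z y) ≤ N :=
    (card_le_card (Icc_subset_Icc_left hxz)).trans
      (le_sup (f := fun y => #(Icc x y)) (hs.mem_toFinset.2 hy))
  omega

end LowerCovers

/-- Let `Λ` be a poset in which every element has only finitely many predecessors
(elements covered by it) and every closed interval is finite. Then every finitely
generated ideal `Γ` admits a decreasing chain of finitely generated ideals
`Γ = Γ_0 ⊇ Γ_1 ⊇ ⋯` with `Γ \ Γ_k` finite for all `k` and `⋂ Γ_k = ∅`. -/
theorem fgIdeal_exhausting_chain {Λ : Type*} [PartialOrder Λ]
    (hpred : ∀ lam : Λ, {μ : Λ | μ ⋖ lam}.Finite)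
    (hint : ∀ μ lam : Λ, {ν : Λ | μ ≤ ν ∧ ν ≤ lam}.Finite)
    (Γ : Set Λ) (hΓ : IsFGIdeal Γ) :
    ∃ C : ℕ → Set Λ,
      C 0 = Γ ∧
      (∀ k, IsFGIdeal (C k)) ∧
      (∀ k, C (k + 1) ⊆ C k) ∧
      (∀ k, (Γ \ C k).Finite) ∧
      (⋂ k, C k) = ∅ := by
  let : LocallyFiniteOrder Λ := LocallyFiniteOrder.ofFiniteIcc hint
  obtain ⟨s, rfl⟩ := hΓ
  have hΓ : {μ : Λ | ∃ x ∈ s, μ ≤ x} = lowerClosure (s : Set Λ) := by ext; simp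
  refine ⟨fun k => lowerClosure (lowerCovers^[k] (s : Set Λ)), hΓ.symm,
    fun k => isFGIdeal_lowerClosure (finite_iterate_lowerCovers hpred s.finite_toSet k),
    fun k => ?_, fun k => ?_, iInter_lowerClosure_iterate_lowerCovers_eq_empty s.finite_toSet⟩
  · dsimp only
    rw [Function.iterate_succ_apply']
    exact lowerClosure_lowerCovers_le _
  · rw [hΓ]
    exact finite_lowerClosure_diff_lowerClosure_iterate_lowerCovers hpred s.finite_toSet k
end

section
/- For every r ≥ 0, the polynomial c_r(x|y) = Σ_{i=0}^{min(r,m)} (−1)^{r−i} σ_i(x_1,…,x_m) p_{r−i}(y_1,…,y_n) is supersymmetric, i.e. c_r ∈ A_s. -/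
/-- The substitution `x₁ = t`, `y₁ = t` into a polynomial in the variables
`x₁, …, x_m, y₁, …, y_n`, viewed as a polynomial in `t` (the remaining variables being
constants). -/
noncomputable def substT (K : Type*) [CommSemiring K] (m n : ℕ)
    (f : MvPolynomial (Fin m ⊕ Fin n) K) : Polynomial (MvPolynomial (Fin m ⊕ Fin n) K) :=
  MvPolynomial.aeval (fun i : Fin m ⊕ Fin n =>
    match i with
    | Sum.inl a => if (a : ℕ) = 0
        then (Polynomial.X : Polynomial (MvPolynomial (Fin m ⊕ Fin n) K))
        else Polynomial.C (MvPolynomial.X (Sum.inl a))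
    | Sum.inr b => if (b : ℕ) = 0
        then (Polynomial.X : Polynomial (MvPolynomial (Fin m ⊕ Fin n) K))
        else Polynomial.C (MvPolynomial.X (Sum.inr b))) f

/-- A polynomial in `x₁, …, x_m, y₁, …, y_n` is supersymmetric if it is symmetric in the
`x` variables and in the `y` variables separately, and the derivative with respect to `t`
of the polynomial obtained by substituting `x₁ = t`, `y₁ = t` vanishes. -/
def IsSuperSym (K : Type*) [CommSemiring K] (m n : ℕ)
    (f : MvPolynomial (Fin m ⊕ Fin n) K) : Prop :=
  (∀ σ : Equiv.Perm (Fin m),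
      MvPolynomial.rename (Equiv.sumCongr σ (Equiv.refl (Fin n))) f = f) ∧
    (∀ τ : Equiv.Perm (Fin n),
      MvPolynomial.rename (Equiv.sumCongr (Equiv.refl (Fin m)) τ) f = f) ∧
    Polynomial.derivative (substT K m n f) = 0

/-- The polynomial `c_r(x|y) = Σ_{i=0}^{min(r,m)} (−1)^{r−i} σ_i(x) p_{r−i}(y)`, where
`σ_i` is the `i`-th elementary symmetric polynomial and `p_j` the `j`-th complete
homogeneous symmetric polynomial. -/
noncomputable def cPoly (K : Type*) [CommRing K] (m n : ℕ) (r : ℕ) :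
    MvPolynomial (Fin m ⊕ Fin n) K :=
  ∑ i ∈ Finset.range (min r m + 1),
    (-1 : MvPolynomial (Fin m ⊕ Fin n) K) ^ (r - i) *
      (MvPolynomial.rename Sum.inl (MvPolynomial.esymm (Fin m) K i) *
        MvPolynomial.rename Sum.inr (MvPolynomial.hsymm (Fin n) K (r - i)))

/-!
The symmetry of `c_r` in the `x` and in the `y` variables is inherited from `σ_i` and `p_j`.
For the cancellation property, `c_r` is the coefficient of `T^r` in
`∏ᵢ (1 + xᵢ T) / ∏ⱼ (1 + yⱼ T)`. Setting `x₁ = y₁ = t`, the two factors `1 + tT` cancel, so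
`c_r(t, x' | t, y') = c_r(0, x' | 0, y')` does not depend on `t`. On coefficients these factors
are the recurrences `σ_{i+1}(t, x') = t σ_i(x') + σ_{i+1}(x')` and
`p_{j+1}(t, y') = t p_j(t, y') + p_{j+1}(y')`.
-/

open Finset PowerSeries in
/-- In generating-function form the hypotheses say `E = (1 + tT) A` and `(1 - tT) H = B`, so the
factor `1 + tT` cancels from `E(T) H(-T) = A(T) B(-T)`. -/
theorem sum_antidiagonal_neg_one_pow_mul_eq_of_recurrence {R : Type*} [CommRing R]
    {e a h b : ℕ → R} (t : R) (he0 : e 0 = a 0) (he : ∀ i, e (i + 1) = t * a i + a (i + 1))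
    (hh0 : h 0 = b 0) (hh : ∀ j, h (j + 1) = t * h j + b (j + 1)) (r : ℕ) :
    ∑ p ∈ antidiagonal r, (-1) ^ p.2 * (e p.1 * h p.2) =
      ∑ p ∈ antidiagonal r, (-1) ^ p.2 * (a p.1 * b p.2) := by
  let alt (u : ℕ → R) : R⟦X⟧ := PowerSeries.mk fun j => (-1) ^ j * u j
  have hE : PowerSeries.mk e = (1 + C t * X) * PowerSeries.mk a := by
    ext (_ | i) <;> simp [add_mul, mul_assoc, he0, he, coeff_succ_X_mul, add_comm]
  have hH : (1 + C t * X) * alt h = alt b := by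
    ext (_ | j) <;> simp [alt, add_mul, mul_assoc, hh0, hh, coeff_succ_X_mul]
    ring
  have hprod : PowerSeries.mk e * alt h = PowerSeries.mk a * alt b := by
    rw [hE, mul_comm (1 + _), mul_assoc, hH]
  simpa [alt, coeff_mul, mul_left_comm] using congrArg (coeff r) hprod

open Finset MvPolynomial

theorem Multiset.esymm_cons_succ {R : Type*} [CommSemiring R] (a : R) (s : Multiset R) (n : ℕ) :
    (a ::ₘ s).esymm (n + 1) = a * s.esymm n + s.esymm (n + 1) := by
  simp only [Multiset.esymm, Multiset.powersetCard_cons, Multiset.map_add, Multiset.sum_add,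
    Multiset.map_map, Function.comp_def, Multiset.prod_cons, Multiset.sum_map_mul_left]
  ring

theorem Multiset.esymm_zero_cons {R : Type*} [CommSemiring R] (s : Multiset R) (n : ℕ) :
    (0 ::ₘ s).esymm n = s.esymm n := by
  cases n with
  | zero => simp [Multiset.esymm]
  | succ n => rw [Multiset.esymm_cons_succ, zero_mul, zero_add]

namespace MvPolynomial

variable {σ R S : Type*} [Fintype σ] [CommSemiring R] [CommSemiring S] [Algebra R S]

theorem esymm_eq_zero_of_card_lt {n : ℕ} (h : Fintype.card σ < n) : esymm σ R n = 0 := by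
  simp [esymm, powersetCard_eq_empty.mpr h]

variable [DecidableEq σ]

theorem aeval_esymm_succ (f : σ → S) (z : σ) (n : ℕ) :
    aeval f (esymm σ R (n + 1)) =
      f z * aeval (Function.update f z 0) (esymm σ R n) +
        aeval (Function.update f z 0) (esymm σ R (n + 1)) := by
  obtain ⟨s, hz, hs⟩ : ∃ s, z ∉ s ∧ (univ : Finset σ).val = z ::ₘ s :=
    ⟨_, (nodup univ).notMem_erase, (Multiset.cons_erase (mem_univ_val z)).symm⟩
  have hrest : s.map (Function.update f z 0) = s.map f :=
    Multiset.map_congr rfl fun a ha => Function.update_of_ne (ne_of_mem_of_not_mem ha hz) _ _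
  rw [aeval_esymm_eq_multiset_esymm, aeval_esymm_eq_multiset_esymm,
    aeval_esymm_eq_multiset_esymm, hs, Multiset.map_cons, Multiset.map_cons, hrest,
    Function.update_self, Multiset.esymm_cons_succ, Multiset.esymm_zero_cons,
    Multiset.esymm_zero_cons]

theorem aeval_hsymm (f : σ → S) (n : ℕ) :
    aeval f (hsymm σ R n) = ∑ s : Sym σ n, (s.1.map f).prod := by
  simp [hsymm, map_multiset_prod, Multiset.map_map]

theorem aeval_hsymm_succ (f : σ → S) (z : σ) (n : ℕ) :
    aeval f (hsymm σ R (n + 1)) =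
      f z * aeval f (hsymm σ R n) + aeval (Function.update f z 0) (hsymm σ R (n + 1)) := by
  let containing : Finset (Sym σ (n + 1)) := univ.filter (z ∈ ·)
  simp only [aeval_hsymm]
  rw [← sum_filter_add_sum_filter_not univ (z ∈ ·),
    ← sum_filter_add_sum_filter_not univ (z ∈ ·)
      (fun s : Sym σ (n + 1) => (s.1.map (Function.update f z 0)).prod)]
  have hcontaining : ∑ s ∈ containing, (s.1.map f).prod =
      f z * ∑ s : Sym σ n, (s.1.map f).prod := by
    rw [mul_sum]
    refine sum_bij' (fun s hs => s.erase z (mem_filter.mp hs).2) (fun s _ => z ::ₛ s)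
      (fun _ _ => mem_univ _) (fun s _ => mem_filter.mpr ⟨mem_univ _, Sym.mem_cons_self z s⟩)
      (fun s _ => Sym.cons_erase _) (fun s _ => Sym.erase_cons_head s z) fun s hs => ?_
    exact (Multiset.prod_map_erase (f := f) (Sym.mem_coe.mpr (mem_filter.mp hs).2)).symm
  have hkilled : ∀ s ∈ containing, (s.1.map (Function.update f z 0)).prod = 0 := fun s hs =>
    Multiset.prod_eq_zero (Multiset.mem_map.mpr ⟨z, (mem_filter.mp hs).2, by simp⟩)
  have hfree : ∀ s ∈ (univ : Finset (Sym σ (n + 1))).filter (z ∉ ·),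
      (s.1.map (Function.update f z 0)).prod = (s.1.map f).prod := fun s hs =>
    congrArg Multiset.prod <| Multiset.map_congr rfl fun a ha =>
      Function.update_of_ne (ne_of_mem_of_not_mem ha (mem_filter.mp hs).2) _ _
  rw [hcontaining, sum_congr rfl hkilled, sum_congr rfl hfree, sum_const_zero, zero_add]

end MvPolynomial

theorem MvPolynomial.derivative_aeval_eq_zero {σ R S : Type*} [CommSemiring R] [CommSemiring S]
    [Algebra R S] {φ : σ → Polynomial S} (hφ : ∀ i, Polynomial.derivative (φ i) = 0)
    (p : MvPolynomial σ R) :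
    Polynomial.derivative (aeval φ p) = 0 := by
  induction p using MvPolynomial.induction_on with
  | C r => simp [Polynomial.algebraMap_apply]
  | add p q hp hq => simp [hp, hq]
  | mul_X p i hp => simp [Polynomial.derivative_mul, hp, hφ]

theorem cPoly_eq_sum_antidiagonal (K : Type*) [CommRing K] (m n r : ℕ) :
    cPoly K m n r = ∑ p ∈ antidiagonal r, (-1) ^ p.2 *
      (rename Sum.inl (esymm (Fin m) K p.1) * rename Sum.inr (hsymm (Fin n) K p.2)) := by
  rw [Nat.sum_antidiagonal_eq_sum_range_succ (fun i j =>
    (-1) ^ j * (rename Sum.inl (esymm (Fin m) K i) * rename Sum.inr (hsymm (Fin n) K j))), cPoly]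
  refine sum_subset (range_subset_range.mpr (by omega)) fun i hir him => ?_
  have hmi : Fintype.card (Fin m) < i := by
    simp only [mem_range] at hir him; simp only [Fintype.card_fin]; omega
  simp [esymm_eq_zero_of_card_lt hmi]

theorem rename_sumCongr_cPoly (K : Type*) [CommRing K] (m n r : ℕ) (σ : Equiv.Perm (Fin m))
    (τ : Equiv.Perm (Fin n)) : rename (Equiv.sumCongr σ τ) (cPoly K m n r) = cPoly K m n r := by
  simp only [cPoly, map_sum, map_mul, map_pow, map_neg, map_one, rename_rename]
  refine sum_congr rfl fun i _ => ?_
  have hinl : ⇑(Equiv.sumCongr σ τ) ∘ Sum.inl = Sum.inl ∘ σ := rfl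
  have hinr : ⇑(Equiv.sumCongr σ τ) ∘ Sum.inr = Sum.inr ∘ τ := rfl
  rw [hinl, hinr, ← rename_rename, ← rename_rename, esymm_isSymmetric, hsymm_isSymmetric]

section Cancellation

variable (K : Type*) [CommRing K] {m n : ℕ} {S : Type*} [CommRing S] [Algebra K S]

theorem aeval_cPoly (f : Fin m → S) (g : Fin n → S) (r : ℕ) :
    aeval (Sum.elim f g) (cPoly K m n r) =
      ∑ p ∈ antidiagonal r, (-1) ^ p.2 * (aeval f (esymm (Fin m) K p.1) *
        aeval g (hsymm (Fin n) K p.2)) := by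
  simp [cPoly_eq_sum_antidiagonal, aeval_rename]

theorem aeval_cPoly_eq_of_eq {f : Fin m → S} {g : Fin n → S} {z₁ : Fin m} {z₂ : Fin n}
    (h : f z₁ = g z₂) (r : ℕ) :
    aeval (Sum.elim f g) (cPoly K m n r) =
      aeval (Sum.elim (Function.update f z₁ 0) (Function.update g z₂ 0)) (cPoly K m n r) := by
  rw [aeval_cPoly, aeval_cPoly]
  exact sum_antidiagonal_neg_one_pow_mul_eq_of_recurrence (f z₁)
    (e := fun i => aeval f (esymm (Fin m) K i))
    (a := fun i => aeval (Function.update f z₁ 0) (esymm (Fin m) K i))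
    (h := fun j => aeval g (hsymm (Fin n) K j))
    (b := fun j => aeval (Function.update g z₂ 0) (hsymm (Fin n) K j))
    (by simp) (aeval_esymm_succ f z₁) (by simp) (by simpa [h] using aeval_hsymm_succ g z₂) r

end Cancellation

/-- For every `r ≥ 0`, the polynomial `c_r` is supersymmetric. -/
theorem cPoly_isSuperSym (K : Type*) [Field K] (m n : ℕ) (hm : 1 ≤ m) (hn : 1 ≤ n)
    (r : ℕ) : IsSuperSym K m n (cPoly K m n r) := by
  refine ⟨fun σ => rename_sumCongr_cPoly K m n r σ (.refl _),
    fun τ => rename_sumCongr_cPoly K m n r (.refl _) τ, ?_⟩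
  let x : Fin m → Polynomial (MvPolynomial (Fin m ⊕ Fin n) K) := fun a =>
    if (a : ℕ) = 0 then .X else .C (X (.inl a))
  let y : Fin n → Polynomial (MvPolynomial (Fin m ⊕ Fin n) K) := fun b =>
    if (b : ℕ) = 0 then .X else .C (X (.inr b))
  have hsubst : substT K m n (cPoly K m n r) = aeval (Sum.elim x y) (cPoly K m n r) := by
    unfold substT; congr; funext i; cases i <;> rfl
  rw [hsubst, aeval_cPoly_eq_of_eq K (z₁ := ⟨0, hm⟩) (z₂ := ⟨0, hn⟩) (by simp [x, y])]
  refine derivative_aeval_eq_zero ?_ _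
  rintro (a | b) <;>
    simp only [Sum.elim_inl, Sum.elim_inr, Function.update_apply] <;> split_ifs <;>
    simp_all [x, y, Fin.ext_iff]
end

section
/- For every r ≥ 1, the polynomial c_r(x|y) = Σ_{i=0}^{min(r,m)} (−1)^{r−i} σ_i(x) p_{r−i}(y) has a unique leading exponent with respect to the dominance order: setting ν_r = (1,…,1 (r times), 0,…,0 | 0,…,0) ∈ ℕ^{m+n} if r ≤ m and ν_r = (1,…,1 | r−m, 0,…,0) if r > m, the coefficient of the monomial with exponent vector ν_r in c_r equals (−1)^{max(r−m,0)} (in particular it is nonzero), and every exponent vector λ ∈ ℕ^{m+n} of a monomial occurring with nonzero coefficient in c_r satisfies λ ≤ ν_r, with λ < ν_r whenever λ ≠ ν_r. -/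
/-- Convert the exponent vector of a monomial in `x₁,…,x_m,y₁,…,y_n` into an element of
`ℤ^{m+n}`, the first `m` coordinates being the `x`-exponents, the last `n` the
`y`-exponents. -/
def expVec (m n : ℕ) (d : (Fin m ⊕ Fin n) →₀ ℕ) : Fin (m + n) → ℤ :=
  fun k =>
    if h : (k : ℕ) < m then (d (Sum.inl ⟨(k : ℕ), h⟩) : ℤ)
    else (d (Sum.inr ⟨(k : ℕ) - m, by have := k.isLt; omega⟩) : ℤ)

/-- The exponent vector `ν_r`: equal to `(1^r, 0^{m−r} | 0^n)` if `r ≤ m`, and to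
`(1^m | r−m, 0^{n−1})` if `r > m`. -/
noncomputable def nuExp (m n r : ℕ) : (Fin m ⊕ Fin n) →₀ ℕ :=
  Finsupp.equivFunOnFinite.symm (fun i : Fin m ⊕ Fin n =>
    match i with
    | Sum.inl a => if r ≤ m then (if (a : ℕ) < r then 1 else 0) else 1
    | Sum.inr b => if r ≤ m then 0 else (if (b : ℕ) = 0 then r - m else 0))

namespace MvPolynomial

open Finset Finsupp

variable {σ τ R : Type*} [CommSemiring R]

theorem prod_map_X_eq_monomial [DecidableEq σ] (s : Multiset σ) :
    (s.map (X : σ → MvPolynomial σ R)).prod = monomial (Multiset.toFinsupp s) 1 := by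
  induction s using Multiset.induction_on with
  | empty => simp
  | cons a s ih =>
    rw [Multiset.map_cons, Multiset.prod_cons, ih, X, monomial_mul, one_mul,
      ← Multiset.singleton_add, Multiset.toFinsupp_add, Multiset.toFinsupp_singleton]

theorem coeff_sum_monomial_one [DecidableEq σ] {ι : Type*} (S : Finset ι) {g : ι → σ →₀ ℕ}
    (hg : Set.InjOn g S) (u : σ →₀ ℕ) :
    coeff u (∑ t ∈ S, monomial (g t) (1 : R)) = if u ∈ S.image g then 1 else 0 := by
  rw [← Finset.sum_image (f := fun x => monomial x (1 : R)) hg, coeff_sum]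
  simp only [coeff_monomial, Finset.sum_ite_eq']

theorem mem_image_sum_single_one_iff [Fintype σ] [DecidableEq σ] (i : ℕ) (u : σ →₀ ℕ) :
    u ∈ (powersetCard i univ).image (fun t => ∑ a ∈ t, single a 1) ↔
      (∀ a, u a ≤ 1) ∧ u.degree = i := by
  have sum_single_apply (t : Finset σ) (b : σ) :
      (∑ a ∈ t, single a 1 : σ →₀ ℕ) b = if b ∈ t then 1 else 0 := by
    simp [Finsupp.finsetSum_apply, Finsupp.single_apply]
  constructor
  · intro hu
    obtain ⟨t, ht, rfl⟩ := mem_image.mp hu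
    refine ⟨fun a => by rw [sum_single_apply]; split_ifs <;> simp, ?_⟩
    simpa [map_sum] using (mem_powersetCard_univ.mp ht)
  · rintro ⟨hu, rfl⟩
    have hsupp : ∀ a ∈ u.support, u a = 1 := fun a ha =>
      le_antisymm (hu a) (Nat.one_le_iff_ne_zero.mpr (Finsupp.mem_support_iff.mp ha))
    refine mem_image.mpr ⟨u.support, mem_powersetCard_univ.mpr ?_, ?_⟩
    · rw [degree_apply, sum_congr rfl hsupp, card_eq_sum_ones]
    · ext b
      rw [sum_single_apply]
      split_ifs with hb
      · exact (hsupp b hb).symm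
      · exact (Finsupp.notMem_support_iff.mp hb).symm

theorem coeff_esymm [Fintype σ] [DecidableEq σ] (i : ℕ) (u : σ →₀ ℕ) :
    coeff u (esymm σ R i) = if (∀ a, u a ≤ 1) ∧ u.degree = i then 1 else 0 := by
  have hinj : Set.InjOn (fun t : Finset σ => ∑ a ∈ t, single a 1)
      ↑(powersetCard i (univ : Finset σ)) :=
    fun s _ t _ hst => by simpa using congr_arg toMultiset hst
  rw [esymm_eq_sum_monomial, coeff_sum_monomial_one _ hinj,
    if_congr (mem_image_sum_single_one_iff i u) rfl rfl]

theorem coeff_hsymm [Fintype σ] [DecidableEq σ] (j : ℕ) (v : σ →₀ ℕ) :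
    coeff v (hsymm σ R j) = if v.degree = j then 1 else 0 := by
  have hinj : Set.InjOn (fun s : Sym σ j => Multiset.toFinsupp s.1) ↑(univ : Finset (Sym σ j)) :=
    fun s _ t _ hst => Subtype.ext (Multiset.toFinsupp.injective hst)
  have hmem : v ∈ univ.image (fun s : Sym σ j => Multiset.toFinsupp s.1) ↔ v.degree = j := by
    constructor
    · intro hv
      obtain ⟨s, -, rfl⟩ := mem_image.mp hv
      exact (Multiset.toFinsupp_sum_eq s.1).trans s.2
    · intro hv
      refine mem_image.mpr ⟨⟨toMultiset v, (card_toMultiset v).trans hv⟩, mem_univ _, ?_⟩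
      exact Finsupp.toMultiset_toFinsupp v
  simp only [hsymm, prod_map_X_eq_monomial]
  rw [coeff_sum_monomial_one _ hinj, if_congr hmem rfl rfl]

theorem coeff_sumElim_rename_inl_mul_rename_inr (p : MvPolynomial σ R) (q : MvPolynomial τ R)
    (u : σ →₀ ℕ) (v : τ →₀ ℕ) :
    coeff (u.sumElim v) (rename Sum.inl p * rename Sum.inr q) = coeff u p * coeff v q := by
  classical
  induction p using MvPolynomial.induction_on' with
  | add p₁ p₂ ih₁ ih₂ => simp only [map_add, add_mul, coeff_add, ih₁, ih₂]
  | monomial u' a =>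
    induction q using MvPolynomial.induction_on' with
    | add q₁ q₂ ih₁ ih₂ => simp only [map_add, mul_add, coeff_add, ih₁, ih₂]
    | monomial v' b =>
      have sumElim_inj : u'.sumElim v' = u.sumElim v ↔ u' = u ∧ v' = v :=
        ⟨fun h => ⟨by simpa using congr_arg (comapDomain Sum.inl · Sum.inl_injective.injOn) h,
          by simpa using congr_arg (comapDomain Sum.inr · Sum.inr_injective.injOn) h⟩,
          fun ⟨hu, hv⟩ => hu ▸ hv ▸ rfl⟩
      rw [rename_monomial, rename_monomial, monomial_mul, ← sumElim_eq_add, coeff_monomial,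
        coeff_monomial, coeff_monomial, if_congr sumElim_inj rfl rfl, ite_zero_mul_ite_zero]

end MvPolynomial

theorem Finsupp.degree_le_card_of_le_one {σ : Type*} [Fintype σ] {u : σ →₀ ℕ}
    (hu : ∀ a, u a ≤ 1) : u.degree ≤ Fintype.card σ := by
  simpa [degree_eq_sum] using Finset.sum_le_sum fun a (_ : a ∈ Finset.univ) => hu a

open MvPolynomial in
theorem coeff_sumElim_cPoly {K : Type*} [CommRing K] (m n r : ℕ) (u : Fin m →₀ ℕ)
    (v : Fin n →₀ ℕ) :
    coeff (u.sumElim v) (cPoly K m n r) =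
      if (∀ a, u a ≤ 1) ∧ u.degree + v.degree = r then (-1) ^ v.degree else 0 := by
  have term (i : ℕ) (hi : i ∈ Finset.range (min r m + 1)) :
      coeff (u.sumElim v) ((-1) ^ (r - i) *
        (rename Sum.inl (esymm (Fin m) K i) * rename Sum.inr (hsymm (Fin n) K (r - i)))) =
      if u.degree = i then
        (if (∀ a, u a ≤ 1) ∧ u.degree + v.degree = r then (-1) ^ v.degree else 0) else 0 := by
    rw [← map_one C, ← map_neg, ← map_pow, coeff_C_mul, coeff_sumElim_rename_inl_mul_rename_inr,
      coeff_esymm, coeff_hsymm]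
    -- `i ≤ r` is what makes the truncated `r - i` the honest degree of the `y`-part
    have hir : i ≤ r := by simp only [Finset.mem_range] at hi; omega
    by_cases hui : u.degree = i
    · subst hui
      by_cases hdeg : u.degree + v.degree = r
      · have hv : v.degree = r - u.degree := by omega
        simp [hdeg, ← hv]
      · have hv : v.degree ≠ r - u.degree := by omega
        simp [hdeg, hv]
    · simp [hui]
  rw [cPoly, coeff_sum, Finset.sum_congr rfl term, Finset.sum_ite_eq, ite_eq_left_iff]
  intro hu_mem
  rw [if_neg]
  rintro ⟨hu, hdeg⟩
  have := u.degree_le_card_of_le_one hu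
  exact hu_mem (Finset.mem_range.mpr (by simp only [Fintype.card_fin] at this; omega))

section Dominance

variable {m n : ℕ}

theorem psum_expVec_sumElim (u : Fin m →₀ ℕ) (v : Fin n →₀ ℕ) (k : ℕ) :
    psum m n (expVec m n (u.sumElim v)) k =
      (∑ a : Fin m, if (a : ℕ) < k then (u a : ℤ) else 0) +
        ∑ b : Fin n, if m + (b : ℕ) < k then (v b : ℤ) else 0 := by
  simp [psum, Fin.sum_univ_add, expVec]

theorem psum_expVec_sumElim_le_degree (u : Fin m →₀ ℕ) (v : Fin n →₀ ℕ) (k : ℕ) :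
    psum m n (expVec m n (u.sumElim v)) k ≤ u.degree + v.degree := by
  rw [psum_expVec_sumElim, Finsupp.degree_eq_sum, Finsupp.degree_eq_sum]
  push_cast
  gcongr with a _ b _ <;> split_ifs <;> simp

theorem psum_expVec_sumElim_total (u : Fin m →₀ ℕ) (v : Fin n →₀ ℕ) :
    psum m n (expVec m n (u.sumElim v)) (m + n) = u.degree + v.degree := by
  rw [psum_expVec_sumElim, Finsupp.degree_eq_sum, Finsupp.degree_eq_sum]
  push_cast
  congr 1 <;> refine Finset.sum_congr rfl fun i _ => if_pos (by omega)

theorem psum_expVec_sumElim_le_of_le {k : ℕ} (hk : k ≤ m) {u : Fin m →₀ ℕ}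
    (hu : ∀ a, u a ≤ 1) (v : Fin n →₀ ℕ) :
    psum m n (expVec m n (u.sumElim v)) k ≤ k := by
  have hy : (∑ b : Fin n, if m + (b : ℕ) < k then (v b : ℤ) else 0) = 0 :=
    Finset.sum_eq_zero fun b _ => if_neg (by omega)
  rw [psum_expVec_sumElim, hy, add_zero]
  calc (∑ a : Fin m, if (a : ℕ) < k then (u a : ℤ) else 0)
      ≤ ∑ a : Fin m, if (a : ℕ) < k then 1 else 0 := by
        gcongr with a; split_ifs <;> simp [hu a]
    _ ≤ k := by simp [Finset.sum_boole, Fin.card_filter_val_lt]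

theorem nuExp_inl (r : ℕ) (a : Fin m) :
    nuExp m n r (Sum.inl a) = if (a : ℕ) < r then 1 else 0 := by
  simp only [nuExp, Finsupp.coe_equivFunOnFinite_symm]
  split_ifs <;> omega

theorem nuExp_inr (r : ℕ) (b : Fin n) :
    nuExp m n r (Sum.inr b) = if (b : ℕ) = 0 then r - m else 0 := by
  simp only [nuExp, Finsupp.coe_equivFunOnFinite_symm]
  split_ifs <;> omega

theorem sum_nuExp_inr (hn : 1 ≤ n) (r : ℕ) : ∑ b : Fin n, nuExp m n r (Sum.inr b) = r - m := by
  rw [Finset.sum_eq_single ⟨0, hn⟩] <;> simp_all [nuExp_inr, Fin.ext_iff]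

theorem psum_expVec_nuExp (hn : 1 ≤ n) (r k : ℕ) :
    psum m n (expVec m n (nuExp m n r)) k =
      ((min m (min k r) : ℕ) : ℤ) + if m < k then ((r - m : ℕ) : ℤ) else 0 := by
  rw [← Finsupp.comapDomain_sumElim_comapDomain (nuExp m n r), psum_expVec_sumElim]
  simp only [Finsupp.comapDomain_apply, nuExp_inl, nuExp_inr]
  congr 1
  · simp only [Nat.cast_ite, Nat.cast_one, Nat.cast_zero, ← ite_and, ← lt_min_iff]
    rw [Finset.sum_boole, Fin.card_filter_val_lt]
  · split_ifs with hk
    · rw [Finset.sum_eq_single ⟨0, hn⟩] <;> simp_all [Fin.ext_iff]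
    · exact Finset.sum_eq_zero fun b _ => if_neg (by omega)

theorem domLE_expVec_nuExp (hn : 1 ≤ n) {r : ℕ} {u : Fin m →₀ ℕ} {v : Fin n →₀ ℕ}
    (hu : ∀ a, u a ≤ 1) (hdeg : u.degree + v.degree = r) :
    domLE m n (expVec m n (u.sumElim v)) (expVec m n (nuExp m n r)) := by
  refine ⟨fun k _ _ => ?_, ?_⟩
  · have hle_deg := psum_expVec_sumElim_le_degree u v k
    rw [psum_expVec_nuExp hn]
    rcases le_or_gt k m with hk | hk
    · have hle_k := psum_expVec_sumElim_le_of_le hk hu v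
      rw [if_neg (by omega)]
      omega
    · rw [if_pos hk]
      omega
  · rw [psum_expVec_sumElim_total, psum_expVec_nuExp hn, if_pos (by omega)]
    omega

end Dominance

theorem cPoly_leading_general (K : Type*) [Field K] (m n : ℕ) (hn : 1 ≤ n)
    (r : ℕ) :
    MvPolynomial.coeff (nuExp m n r) (cPoly K m n r) = (-1 : K) ^ (r - m) ∧
      ∀ d : (Fin m ⊕ Fin n) →₀ ℕ, MvPolynomial.coeff d (cPoly K m n r) ≠ 0 →
        domLE m n (expVec m n d) (expVec m n (nuExp m n r)) ∧
          (expVec m n d ≠ expVec m n (nuExp m n r) →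
            domLT m n (expVec m n d) (expVec m n (nuExp m n r))) := by
  have split_sumElim (d : (Fin m ⊕ Fin n) →₀ ℕ) : ∃ u v, d = Finsupp.sumElim u v :=
    ⟨_, _, (Finsupp.comapDomain_sumElim_comapDomain d).symm⟩
  obtain ⟨u₀, v₀, hν⟩ := split_sumElim (nuExp m n r)
  have hu₀ (a : Fin m) : u₀ a ≤ 1 := by
    rw [← Finsupp.sumElim_inl u₀ v₀, ← hν, nuExp_inl]
    split_ifs <;> simp
  have hdeg₀ : u₀.degree + v₀.degree = r := by
    have htotal := psum_expVec_sumElim_total u₀ v₀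
    rw [← hν, psum_expVec_nuExp hn, if_pos (by omega)] at htotal
    omega
  have hv₀ : v₀.degree = r - m := by
    rw [Finsupp.degree_eq_sum, ← sum_nuExp_inr hn r, hν]
    rfl
  refine ⟨by rw [hν, coeff_sumElim_cPoly, if_pos ⟨hu₀, hdeg₀⟩, hv₀], fun d hd => ?_⟩
  obtain ⟨u, v, rfl⟩ := split_sumElim d
  rw [coeff_sumElim_cPoly, ne_eq, ite_eq_right_iff, not_forall] at hd
  obtain ⟨⟨hu, hdeg⟩, -⟩ := hd
  have hdom := domLE_expVec_nuExp hn hu hdeg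
  exact ⟨hdom, fun hne => ⟨hdom, hne⟩⟩

/-- For `r ≥ 1`, the polynomial `c_r` has a unique leading exponent `ν_r` for the
dominance order: the coefficient of the monomial with exponent `ν_r` is
`(−1)^{max(r−m,0)}` (in particular nonzero), and every exponent vector of a monomial
occurring with nonzero coefficient in `c_r` is `≤ ν_r`, strictly so when different
from `ν_r`. -/
theorem cPoly_leading (K : Type*) [Field K] (m n : ℕ) (hm : 1 ≤ m) (hn : 1 ≤ n)
    (r : ℕ) (hr : 1 ≤ r) :
    MvPolynomial.coeff (nuExp m n r) (cPoly K m n r) = (-1 : K) ^ (r - m) ∧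
      ∀ d : (Fin m ⊕ Fin n) →₀ ℕ, MvPolynomial.coeff d (cPoly K m n r) ≠ 0 →
        domLE m n (expVec m n d) (expVec m n (nuExp m n r)) ∧
          (expVec m n d ≠ expVec m n (nuExp m n r) →
            domLT m n (expVec m n d) (expVec m n (nuExp m n r))) :=
  cPoly_leading_general K m n hn r
end

section
/- Let K be a field of characteristic p > 0. If f ∈ K[x_1,…,x_m,y_1,…,y_n] is p-balanced and symmetric in x_1,…,x_m and in y_1,…,y_n separately, then f is supersymmetric, i.e. f ∈ A_s. -/
/-- A polynomial `f = Σ_λ a_λ x^{λ_+} y^{λ_-}` is `p`-balanced if `p` divides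
`λ_i + λ_j` for every exponent vector `λ` with `a_λ ≠ 0`, whenever `1 ≤ i ≤ m < j ≤ m+n`
(i.e. for every `x`-coordinate `i` and every `y`-coordinate `j`). -/
def PBalanced (K : Type*) [CommSemiring K] (m n p : ℕ)
    (f : MvPolynomial (Fin m ⊕ Fin n) K) : Prop :=
  ∀ d : (Fin m ⊕ Fin n) →₀ ℕ, MvPolynomial.coeff d f ≠ 0 →
    ∀ (i : Fin m) (j : Fin n), p ∣ (d (Sum.inl i) + d (Sum.inr j))

noncomputable def substTFun (K : Type*) [CommSemiring K] (m n : ℕ) :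
    Fin m ⊕ Fin n → Polynomial (MvPolynomial (Fin m ⊕ Fin n) K) :=
  fun i =>
    match i with
    | Sum.inl a => if (a : ℕ) = 0
        then (Polynomial.X : Polynomial (MvPolynomial (Fin m ⊕ Fin n) K))
        else Polynomial.C (MvPolynomial.X (Sum.inl a))
    | Sum.inr b => if (b : ℕ) = 0
        then (Polynomial.X : Polynomial (MvPolynomial (Fin m ⊕ Fin n) K))
        else Polynomial.C (MvPolynomial.X (Sum.inr b))

theorem substT_monomial (K : Type*) [Field K] (m n : ℕ) (hm : 1 ≤ m) (hn : 1 ≤ n)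
    (d : (Fin m ⊕ Fin n) →₀ ℕ) (c : K) :
    ∃ w, (MvPolynomial.aeval (substTFun K m n)) (MvPolynomial.monomial d c) =
      Polynomial.C w * Polynomial.X ^ (d (Sum.inl ⟨0, hm⟩) + d (Sum.inr ⟨0, hn⟩)) := by
  classical
  set g := substTFun K m n with hg
  set a0 : Fin m ⊕ Fin n := Sum.inl ⟨0, hm⟩ with ha0
  set b0 : Fin m ⊕ Fin n := Sum.inr ⟨0, hn⟩ with hb0
  rw [MvPolynomial.aeval_monomial]
  have hprod : d.prod (fun i e => g i ^ e) = ∏ i : Fin m ⊕ Fin n, g i ^ d i :=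
    Finsupp.prod_fintype _ _ (fun i => pow_zero _)
  rw [hprod]
  have hab : b0 ∈ Finset.univ.erase a0 := by simp [ha0, hb0]
  rw [← Finset.mul_prod_erase Finset.univ _ (Finset.mem_univ a0),
      ← Finset.mul_prod_erase _ _ hab]
  have hga : g a0 = Polynomial.X := by simp [hg, substTFun, ha0]
  have hgb : g b0 = Polynomial.X := by simp [hg, substTFun, hb0]
  refine ⟨(MvPolynomial.C c) * ∏ i ∈ (Finset.univ.erase a0).erase b0, MvPolynomial.X i ^ d i, ?_⟩
  have hrest : ∏ i ∈ (Finset.univ.erase a0).erase b0, g i ^ d i =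
      Polynomial.C (∏ i ∈ (Finset.univ.erase a0).erase b0, MvPolynomial.X i ^ d i) := by
    rw [map_prod]
    refine Finset.prod_congr rfl fun i hi => ?_
    have hia : i ≠ a0 := (Finset.mem_erase.mp (Finset.mem_of_mem_erase hi)).1
    have hib : i ≠ b0 := (Finset.mem_erase.mp hi).1
    cases i with
    | inl a =>
        have : (a : ℕ) ≠ 0 := by
          intro h
          exact hia (by simp [ha0, Fin.ext_iff, h])
        simp [hg, substTFun, this]
    | inr b =>
        have : (b : ℕ) ≠ 0 := by
          intro h
          exact hib (by simp [hb0, Fin.ext_iff, h])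
        simp [hg, substTFun, this]
  rw [hga, hgb, hrest]
  have : algebraMap K (Polynomial (MvPolynomial (Fin m ⊕ Fin n) K)) c
      = Polynomial.C (MvPolynomial.C c) := rfl
  rw [this, map_mul, pow_add]
  ring

/-- Over a field of characteristic `p > 0`, any `p`-balanced polynomial that is symmetric
in the `x` variables and in the `y` variables separately is supersymmetric. -/
theorem pBalanced_symmetric_isSuperSym (K : Type*) [Field K] (p : ℕ) [CharP K p]
    (hp : 0 < p) (m n : ℕ) (hm : 1 ≤ m) (hn : 1 ≤ n)
    (f : MvPolynomial (Fin m ⊕ Fin n) K) (hbal : PBalanced K m n p f)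
    (hx : ∀ σ : Equiv.Perm (Fin m),
      MvPolynomial.rename (Equiv.sumCongr σ (Equiv.refl (Fin n))) f = f)
    (hy : ∀ τ : Equiv.Perm (Fin n),
      MvPolynomial.rename (Equiv.sumCongr (Equiv.refl (Fin m)) τ) f = f) :
    IsSuperSym K m n f := by
  refine ⟨hx, hy, ?_⟩
  classical
  have hsub : substT K m n f = (MvPolynomial.aeval (substTFun K m n)) f := rfl
  rw [hsub, f.as_sum, map_sum, map_sum]
  refine Finset.sum_eq_zero fun d hd => ?_
  have hc : MvPolynomial.coeff d f ≠ 0 := MvPolynomial.mem_support_iff.mp hd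
  have hdvd : p ∣ d (Sum.inl ⟨0, hm⟩) + d (Sum.inr ⟨0, hn⟩) := hbal d hc ⟨0, hm⟩ ⟨0, hn⟩
  obtain ⟨w, hw⟩ := substT_monomial K m n hm hn d (MvPolynomial.coeff d f)
  rw [hw, Polynomial.derivative_C_mul_X_pow]
  have hz : ((d (Sum.inl ⟨0, hm⟩) + d (Sum.inr ⟨0, hn⟩) : ℕ) :
      MvPolynomial (Fin m ⊕ Fin n) K) = 0 :=
    (CharP.cast_eq_zero_iff _ p _).mpr hdvd
  rw [hz, mul_zero, map_zero, zero_mul]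
end
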